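/- Let K = 1 (so k = 1) and let r_1 be as defined, i.e. r_1(t) = √(2/π)·∫_0^{1/√t} [e^{−y²/2} − (1/(2y²))·(1 − e^{−2y²})] dy. Then lim_{t→0⁺} r_1(t)/√t = 1/√(2π), i.e. r_1(t) ∼ √(t/(2π)) as t → 0⁺. -/

import Mathlib

/-!
With `f(y) = e^{-y²/2} - (1 - e^{-2y²})/(2y²)` the integrand at `k = 1`, `f = g + h'` where
`g(y) = e^{-y²/2} - 2e^{-2y²}` and `h(y) = (1 - e^{-2y²})/(2y)`. The two Gaussian integrals give
`∫₀^∞ g = 0`, so `∫₀^x f = h(x) - ∫ₓ^∞ g`. Multiplying by `x`, the first term tends to `1/2` and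
the Gaussian tail term to `0`; with `x = 1/√t` this gives `r₁(t)/√t → √(2/π)/2 = 1/√(2π)`.
-/

open MeasureTheory Real Filter Set Topology

/-- The explicit integral formula for the Bessel(3) call price with strike `K = 1/k`. -/
noncomputable def rCall (k t : ℝ) : ℝ :=
  (1 / k) * Real.sqrt (2 / Real.pi) *
    ∫ y in (0:ℝ)..(1 / Real.sqrt t),
      (Real.exp (-(y ^ 2) / 2) -
        (1 / (2 * k * y ^ 2)) *
          (Real.exp (-((1 - k) ^ 2 * y ^ 2) / 2) - Real.exp (-((1 + k) ^ 2 * y ^ 2) / 2)))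

lemma one_sub_exp_neg_mem_Icc {u : ℝ} (hu : 0 ≤ u) : 1 - exp (-u) ∈ Icc 0 u :=
  ⟨sub_nonneg.2 (exp_le_one_iff.2 (neg_nonpos.2 hu)), by linarith [one_sub_le_exp_neg u]⟩

lemma tendsto_mul_setIntegral_Ioi_of_abs_le_exp {g : ℝ → ℝ} {a C : ℝ}
    (hg : ∀ y, a ≤ y → |g y| ≤ C * exp (-y)) :
    Tendsto (fun x => x * ∫ y in Ioi x, g y) atTop (𝓝 0) := by
  have hC : ∀ x, IntegrableOn (fun y => C * exp (-y)) (Ioi x) := fun x => by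
    simpa [IntegrableOn] using (exp_neg_integrableOn_Ioi x one_pos).const_mul C
  have htail : ∀ x, a ≤ x → |∫ y in Ioi x, g y| ≤ C * exp (-x) := fun x hx => by
    rw [← integral_exp_neg_Ioi, ← integral_const_mul, ← norm_eq_abs]
    refine norm_integral_le_of_norm_le (hC x) ?_
    filter_upwards [ae_restrict_mem measurableSet_Ioi] with y hy
    simpa using hg y (hx.trans hy.le)
  refine squeeze_zero_norm' ?_ (by simpa using
    (tendsto_pow_mul_exp_neg_atTop_nhds_zero 1).const_mul |C|)
  filter_upwards [eventually_ge_atTop a, eventually_ge_atTop 0] with x hxa hx0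
  rw [norm_mul, norm_of_nonneg hx0, norm_eq_abs]
  calc x * |∫ y in Ioi x, g y| ≤ x * (C * exp (-x)) := by gcongr; exact htail x hxa
    _ ≤ |C| * (x * exp (-x)) := by
      rw [mul_left_comm]; gcongr; exact le_abs_self C

namespace RCallOne

noncomputable def integrand (y : ℝ) : ℝ :=
  exp (-(y ^ 2) / 2) - 1 / (2 * y ^ 2) * (1 - exp (-(2 * y ^ 2)))

noncomputable def gaussianDiff (y : ℝ) : ℝ :=
  exp (-(1 / 2) * y ^ 2) - 2 * exp (-2 * y ^ 2)

-- Division by zero makes `antideriv 0 = 0`, which is also its limit at `0`.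
noncomputable def antideriv (y : ℝ) : ℝ := (1 - exp (-(2 * y ^ 2))) / (2 * y)

lemma abs_integrand_le_one (y : ℝ) : |integrand y| ≤ 1 := by
  have hexp : exp (-(y ^ 2) / 2) ≤ 1 := exp_le_one_iff.2 (by nlinarith [sq_nonneg y])
  have hquot : 1 / (2 * y ^ 2) * (1 - exp (-(2 * y ^ 2))) ∈ Icc 0 1 := by
    obtain ⟨h0, h1⟩ := one_sub_exp_neg_mem_Icc (by positivity : 0 ≤ 2 * y ^ 2)
    rw [one_div_mul_eq_div]
    exact ⟨by positivity, div_le_one_of_le₀ h1 (by positivity)⟩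
  rw [integrand, abs_sub_le_iff]
  constructor <;> linarith [exp_pos (-(y ^ 2) / 2), hquot.1, hquot.2]

lemma intervalIntegrable_integrand (a b : ℝ) : IntervalIntegrable integrand volume a b := by
  rw [intervalIntegrable_iff]
  refine Measure.integrableOn_of_bounded (M := 1) measure_Ioc_lt_top.ne
    (by unfold integrand; fun_prop) (Eventually.of_forall fun y => ?_)
  simpa using abs_integrand_le_one y

@[simp]
lemma antideriv_zero : antideriv 0 = 0 := by
  simp [antideriv]

lemma abs_antideriv_le (y : ℝ) : |antideriv y| ≤ |y| := by
  rcases eq_or_ne y 0 with rfl | hy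
  · simp [antideriv]
  obtain ⟨h0, h1⟩ := one_sub_exp_neg_mem_Icc (by positivity : 0 ≤ 2 * y ^ 2)
  rw [antideriv, abs_div, abs_of_nonneg h0, abs_mul, abs_two, div_le_iff₀ (by positivity)]
  nlinarith [sq_abs y]

lemma continuous_antideriv : Continuous antideriv := by
  refine continuous_iff_continuousAt.2 fun y => ?_
  rcases eq_or_ne y 0 with rfl | hy
  · rw [ContinuousAt, antideriv_zero]
    exact squeeze_zero_norm abs_antideriv_le (by simpa using (continuous_abs.tendsto (0 : ℝ)))
  · exact ContinuousAt.div (by fun_prop) (by fun_prop) (by simpa using hy)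

lemma hasDerivAt_antideriv {y : ℝ} (hy : y ≠ 0) :
    HasDerivAt antideriv (integrand y - gaussianDiff y) y := by
  have hnum : HasDerivAt (fun y => 1 - exp (-(2 * y ^ 2))) (exp (-(2 * y ^ 2)) * (4 * y)) y :=
    (((hasDerivAt_pow 2 y).const_mul 2).fun_neg.exp.const_sub 1).congr_deriv (by ring)
  refine (hnum.div ((hasDerivAt_id' y).const_mul 2) (by simpa using hy)).congr_deriv ?_
  simp only [integrand, gaussianDiff]
  field_simp
  ring_nf

lemma integral_integrand_eq {x : ℝ} (hx : 0 ≤ x) :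
    ∫ y in (0:ℝ)..x, integrand y = (∫ y in (0:ℝ)..x, gaussianDiff y) + antideriv x := by
  have hg : IntervalIntegrable gaussianDiff volume 0 x := by
    apply Continuous.intervalIntegrable; unfold gaussianDiff; fun_prop
  have hftc : ∫ y in (0:ℝ)..x, (integrand y - gaussianDiff y) = antideriv x - antideriv 0 :=
    intervalIntegral.integral_eq_sub_of_hasDerivAt_of_le hx continuous_antideriv.continuousOn
      (fun y hy => hasDerivAt_antideriv hy.1.ne') ((intervalIntegrable_integrand 0 x).sub hg)
  rw [intervalIntegral.integral_sub (intervalIntegrable_integrand 0 x) hg, antideriv_zero] at hftc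
  linarith

lemma integrable_gaussianDiff : Integrable gaussianDiff :=
  (integrable_exp_neg_mul_sq (by norm_num)).sub
    ((integrable_exp_neg_mul_sq (by norm_num)).const_mul 2)

lemma setIntegral_gaussianDiff_Ioi_zero : ∫ y in Ioi (0:ℝ), gaussianDiff y = 0 := by
  have hsqrt : √(π / (1 / 2)) = 2 * √(π / 2) := by
    rw [show π / (1 / 2) = 2 ^ 2 * (π / 2) by ring, sqrt_mul (by norm_num), sqrt_sq (by norm_num)]
  unfold gaussianDiff
  rw [integral_sub
    (integrable_exp_neg_mul_sq (by norm_num)).integrableOn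
    ((integrable_exp_neg_mul_sq (by norm_num)).const_mul 2).integrableOn,
    integral_const_mul, integral_gaussian_Ioi, integral_gaussian_Ioi, hsqrt]
  ring

lemma abs_gaussianDiff_le {y : ℝ} (hy : 2 ≤ y) : |gaussianDiff y| ≤ 3 * exp (-y) := by
  have h1 : exp (-(1 / 2) * y ^ 2) ≤ exp (-y) := exp_le_exp.2 (by nlinarith)
  have h2 : exp (-2 * y ^ 2) ≤ exp (-y) := exp_le_exp.2 (by nlinarith)
  rw [gaussianDiff, abs_sub_le_iff]
  constructor <;> linarith [exp_pos (-(1 / 2) * y ^ 2), exp_pos (-2 * y ^ 2)]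

lemma tendsto_mul_integral_integrand :
    Tendsto (fun x => x * ∫ y in (0:ℝ)..x, integrand y) atTop (𝓝 (1 / 2)) := by
  have htail := tendsto_mul_setIntegral_Ioi_of_abs_le_exp (fun y hy => abs_gaussianDiff_le hy)
  have hexp : Tendsto (fun x : ℝ => exp (-(2 * x ^ 2))) atTop (𝓝 0) :=
    tendsto_exp_atBot.comp <| tendsto_neg_atTop_atBot.comp <|
      (tendsto_pow_atTop two_ne_zero).const_mul_atTop two_pos
  have hlim := (hexp.const_sub 1).div_const 2 |>.sub htail
  rw [sub_zero, sub_zero] at hlim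
  refine hlim.congr' ?_
  filter_upwards [eventually_gt_atTop 0] with x hx
  rw [integral_integrand_eq hx.le, ← intervalIntegral.integral_Ioi_sub_Ioi
    integrable_gaussianDiff.integrableOn hx.le, setIntegral_gaussianDiff_Ioi_zero, antideriv]
  field_simp
  ring

lemma rCall_one_eq (t : ℝ) :
    rCall 1 t = √(2 / π) * ∫ y in (0:ℝ)..(1 / √t), integrand y := by
  rw [rCall, div_one, one_mul]
  congr 1
  refine intervalIntegral.integral_congr fun y _ => ?_
  rw [show -((1 + 1 : ℝ) ^ 2 * y ^ 2) / 2 = -(2 * y ^ 2) by ring]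
  norm_num [integrand]

end RCallOne

theorem stmt_4 :
    Filter.Tendsto (fun t : ℝ => rCall 1 t / Real.sqrt t) (nhdsWithin 0 (Set.Ioi 0))
      (nhds (1 / Real.sqrt (2 * Real.pi))) := by
  have hx : Tendsto (fun t : ℝ => 1 / √t) (𝓝[>] 0) atTop := by
    simpa [sqrt_inv, Function.comp_def] using tendsto_sqrt_atTop.comp tendsto_inv_nhdsGT_zero
  have hval : √(2 / π) * (1 / 2) = 1 / √(2 * π) := by
    rw [sqrt_div zero_le_two, sqrt_mul zero_le_two]
    field_simp
    rw [sq_sqrt zero_le_two]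
  rw [← hval]
  refine (RCallOne.tendsto_mul_integral_integrand.comp hx |>.const_mul _).congr fun t => ?_
  simp only [Function.comp, RCallOne.rCall_one_eq]
  ring
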